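/- Let Z and W be Zinbiel algebras with bilinear maps ⇀: W×Z→Z, ↼: Z×W→Z, ω: W×W→Z. The crossed product multiplication on Z⊕W, (x,u)∘(y,v) = (x·y + x↼v + u⇀y + ω(u,v), u·v), makes Z⊕W a Zinbiel algebra if and only if for all x,y∈Z and u,v,w∈W: (CS1) (x↼v)·y = x·(v⇀y + y↼v); (CS2) (u⇀x)·y = u⇀(x·y) + u⇀(y·x); (CS3) ω(u,v)·x + (u·v)⇀x = u⇀(v⇀x + x↼v); (CS4) (x·y)↼w = x·(y↼w + w⇀y); (CS5) (x↼v)↼w = x·(ω(v,w)+ω(w,v)) + x↼(v·w + w·v); (CS6) (u⇀x)↼w = u⇀(x↼w + w⇀x); (CS7) ω(u,v)↼w + ω(u·v, w) = u⇀(ω(v,w)+ω(w,v)) + ω(u, v·w + w·v). -/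
import Mathlib


/-- The crossed product multiplication on `Z ⊕ W`:
`(x,u)∘(y,v) = (x·y + x↼v + u⇀y + ω(u,v), u·v)`. -/
def cMul {k Z W : Type*} [CommRing k] [AddCommGroup Z] [Module k Z]
    [AddCommGroup W] [Module k W]
    (m : Z →ₗ[k] Z →ₗ[k] Z) (mW : W →ₗ[k] W →ₗ[k] W)
    (pl : Z →ₗ[k] W →ₗ[k] Z) (pr : W →ₗ[k] Z →ₗ[k] Z)
    (ω : W →ₗ[k] W →ₗ[k] Z)
    (a b : Z × W) : Z × W :=
  (m a.1 b.1 + pl a.1 b.2 + pr a.2 b.1 + ω a.2 b.2, mW a.2 b.2)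

/-- The crossed product `Z #_ω W` is a Zinbiel algebra iff (CS1)–(CS7) hold. -/
theorem stmt6 {k Z W : Type*} [Field k] [CharZero k]
    [AddCommGroup Z] [Module k Z] [AddCommGroup W] [Module k W]
    (m : Z →ₗ[k] Z →ₗ[k] Z)
    (hZ : ∀ x y z : Z, m (m x y) z = m x (m y z + m z y))
    (mW : W →ₗ[k] W →ₗ[k] W)
    (hW : ∀ u v w : W, mW (mW u v) w = mW u (mW v w + mW w v))
    (pl : Z →ₗ[k] W →ₗ[k] Z) (pr : W →ₗ[k] Z →ₗ[k] Z)
    (ω : W →ₗ[k] W →ₗ[k] Z) :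
    (∀ a b c : Z × W,
      cMul m mW pl pr ω (cMul m mW pl pr ω a b) c =
        cMul m mW pl pr ω a (cMul m mW pl pr ω b c + cMul m mW pl pr ω c b)) ↔
    -- (CS1)
    ((∀ (x : Z) (v : W) (y : Z), m (pl x v) y = m x (pr v y + pl y v)) ∧
     -- (CS2)
     (∀ (u : W) (x y : Z), m (pr u x) y = pr u (m x y) + pr u (m y x)) ∧
     -- (CS3)
     (∀ (u v : W) (x : Z),
       m (ω u v) x + pr (mW u v) x = pr u (pr v x + pl x v)) ∧
     -- (CS4)
     (∀ (x y : Z) (w : W), pl (m x y) w = m x (pl y w + pr w y)) ∧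
     -- (CS5)
     (∀ (x : Z) (v w : W),
       pl (pl x v) w = m x (ω v w + ω w v) + pl x (mW v w + mW w v)) ∧
     -- (CS6)
     (∀ (u : W) (x : Z) (w : W), pl (pr u x) w = pr u (pl x w + pr w x)) ∧
     -- (CS7)
     (∀ u v w : W,
       pl (ω u v) w + ω (mW u v) w
         = pr u (ω v w + ω w v) + ω u (mW v w + mW w v))) := by
  constructor
  · intro h
    refine ⟨?_, ?_, ?_, ?_, ?_, ?_, ?_⟩
    · intro x v y
      have := congrArg Prod.fst (h (x, 0) (0, v) (y, 0))
      simpa [cMul] using this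
    · intro u x y
      have := congrArg Prod.fst (h ((0:Z), u) (x, 0) (y, 0))
      simpa [cMul, map_add] using this
    · intro u v x
      have := congrArg Prod.fst (h ((0:Z), u) (0, v) (x, 0))
      simpa [cMul] using this
    · intro x y w
      have := congrArg Prod.fst (h (x, (0:W)) (y, 0) (0, w))
      simpa [cMul] using this
    · intro x v w
      have := congrArg Prod.fst (h (x, (0:W)) (0, v) (0, w))
      simpa [cMul] using this
    · intro u x w
      have := congrArg Prod.fst (h ((0:Z), u) (x, 0) (0, w))
      simpa [cMul] using this
    · intro u v w
      have := congrArg Prod.fst (h ((0:Z), u) (0, v) (0, w))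
      simpa [cMul] using this
  · rintro ⟨h1, h2, h3, h4, h5, h6, h7⟩
    intro a b c
    obtain ⟨x, u⟩ := a
    obtain ⟨y, v⟩ := b
    obtain ⟨z, w⟩ := c
    have h3' : ∀ (u v : W) (x : Z),
        m (ω u v) x = pr u (pr v x + pl x v) - pr (mW u v) x := by
      intro u v x; rw [eq_sub_iff_add_eq]; exact h3 u v x
    have h7' : ∀ u v w : W,
        pl (ω u v) w = pr u (ω v w + ω w v) + ω u (mW v w + mW w v)
          - ω (mW u v) w := by
      intro u v w; rw [eq_sub_iff_add_eq]; exact h7 u v w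
    refine Prod.ext ?_ ?_
    · show m _ _ + pl _ _ + pr _ _ + ω _ _ = _
      simp only [cMul, Prod.mk_add_mk, map_add, LinearMap.add_apply]
      rw [hZ, h1, h2, h3', h4, h5, h6, h7']
      simp only [map_add]
      abel
    · show mW _ _ = _
      simp only [cMul, Prod.mk_add_mk, map_add]
      rw [hW u v w, map_add]
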